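/- arXiv:1010.1990 — 4 statements merged into one kernel-verified Lean document; each statement's English description precedes it below -/
import Mathlib

section
/- Let ABCDEF be a hexagon with all angles 120° and opposite sides parallel at distance 1. If |AB| ≤ |BC|, then |AB| + |BC| = 2/√3, and hence |AB| ≤ 1/√3. -/
/-!
Write `u = B - A`, `v = C - B`, `w = D - C` and `a, b, c` for their lengths. The angles of `120°`
at `B` and `C` give `⟪u, v⟫ = ab/2` and `⟪v, w⟫ = bc/2`; as `DE ∥ AB`, the angle at `D` gives
`⟪u, w⟫ = ±ac/2`, and the Gram determinant of `u, v, w`, which vanishes in the plane, forces the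
sign `-`. The line `FA` is parallel to `CD`, so its distance `1` from `C` satisfies
`c² = ‖u + v‖² c² - ⟪u + v, w⟫²`, which after substitution reads `3 (a + b)² = 4`.
-/

open EuclideanGeometry Affine Metric RealInnerProductSpace Module

theorem Matrix.det_gram_eq_zero_of_finrank_lt {𝕜 E n : Type*} [RCLike 𝕜] [NormedAddCommGroup E]
    [InnerProductSpace 𝕜 E] [FiniteDimensional 𝕜 E] [Fintype n] [DecidableEq n] {v : n → E}
    (h : finrank 𝕜 E < Fintype.card n) : (gram 𝕜 v).det = 0 := by
  by_contra hdet
  exact h.not_ge (linearIndependent_of_det_gram_ne_zero hdet).fintype_card_le_finrank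

section InnerProductSpace

variable {V P : Type*} [NormedAddCommGroup V] [InnerProductSpace ℝ V]

theorem gram_det_eq_zero_of_finrank_eq_two [FiniteDimensional ℝ V] (hV : finrank ℝ V = 2)
    (u v w : V) :
    ‖u‖ ^ 2 * ‖v‖ ^ 2 * ‖w‖ ^ 2 + 2 * ⟪u, v⟫ * ⟪v, w⟫ * ⟪u, w⟫
      - ‖u‖ ^ 2 * ⟪v, w⟫ ^ 2 - ‖v‖ ^ 2 * ⟪u, w⟫ ^ 2 - ‖w‖ ^ 2 * ⟪u, v⟫ ^ 2 = 0 := by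
  have h := Matrix.det_gram_eq_zero_of_finrank_lt (𝕜 := ℝ) (v := ![u, v, w]) (by simp [hV])
  simp only [Matrix.det_fin_three, Matrix.gram_apply, Matrix.cons_val_zero, Matrix.cons_val_one,
    Matrix.cons_val_two, Matrix.head_cons, Matrix.tail_cons, real_inner_self_eq_norm_sq,
    real_inner_comm u v, real_inner_comm v w, real_inner_comm u w] at h
  linear_combination h

variable [MetricSpace P] [NormedAddTorsor V P]

theorem ne_of_angle_eq_two_pi_div_three {A B C : P} (h : ∠ A B C = 2 * Real.pi / 3) :
    A ≠ B ∧ C ≠ B := by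
  constructor <;> rintro rfl <;> simp at h <;> linarith [Real.pi_pos]

theorem inner_vsub_vsub_of_angle_eq_two_pi_div_three {A B C : P}
    (h : ∠ A B C = 2 * Real.pi / 3) : ⟪B -ᵥ A, C -ᵥ B⟫ = dist A B * dist B C / 2 := by
  have hcos : Real.cos (2 * Real.pi / 3) = -(1 / 2) := by
    rw [show 2 * Real.pi / 3 = Real.pi - Real.pi / 3 by ring, Real.cos_pi_sub,
      Real.cos_pi_div_three]
  have := InnerProductGeometry.cos_angle_mul_norm_mul_norm (A -ᵥ B) (C -ᵥ B)
  rw [← EuclideanGeometry.angle, h, hcos, ← dist_eq_norm_vsub, ← dist_eq_norm_vsub] at this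
  rw [← neg_vsub_eq_vsub_rev, inner_neg_left, ← this, dist_comm C B]
  ring

theorem sq_inner_vsub_vsub_of_angle_eq_two_pi_div_three_of_parallel {A B C D E : P}
    (hCDE : ∠ C D E = 2 * Real.pi / 3) (hAB_DE : line[ℝ, A, B] ∥ line[ℝ, D, E]) :
    ⟪B -ᵥ A, D -ᵥ C⟫ ^ 2 = (dist A B * dist C D / 2) ^ 2 := by
  obtain ⟨t, ht⟩ : ∃ t : ℝ, t • (E -ᵥ D) = B -ᵥ A := by
    rw [← Submodule.mem_span_singleton, ← vectorSpan_pair_rev, ← direction_affineSpan,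
      ← hAB_DE.direction_eq, direction_affineSpan]
    exact vsub_rev_mem_vectorSpan_pair ℝ A B
  have hAB : dist A B = |t| * dist D E := by
    rw [dist_eq_norm_vsub' V, ← ht, norm_smul, Real.norm_eq_abs, dist_eq_norm_vsub' V]
  rw [← ht, real_inner_smul_left, real_inner_comm,
    inner_vsub_vsub_of_angle_eq_two_pi_div_three hCDE, hAB]
  simp only [mul_pow, div_pow, sq_abs]
  ring

theorem infDist_sq_mul_norm_sq_of_direction_eq_span {s : AffineSubspace ℝ P}
    [s.direction.HasOrthogonalProjection] {p q : P} {x : V} (hq : q ∈ s)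
    (hs : s.direction = ℝ ∙ x) :
    infDist p s ^ 2 * ‖x‖ ^ 2 = ‖p -ᵥ q‖ ^ 2 * ‖x‖ ^ 2 - ⟪p -ᵥ q, x⟫ ^ 2 := by
  have : Nonempty s := ⟨⟨q, hq⟩⟩
  set f : P := (orthogonalProjection s p : P) with hf
  obtain ⟨t, ht⟩ : ∃ t : ℝ, t • x = f -ᵥ q := by
    rw [← Submodule.mem_span_singleton, ← hs]
    exact AffineSubspace.vsub_mem_direction (orthogonalProjection_mem p) hq
  have hperp : ⟪p -ᵥ f, x⟫ = 0 :=
    Submodule.inner_right_of_mem_orthogonal (hs ▸ Submodule.mem_span_singleton_self x)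
      (vsub_orthogonalProjection_mem_direction_orthogonal s p) |> (real_inner_comm _ _).trans
  have hsplit : p -ᵥ q = (p -ᵥ f) + t • x := by rw [ht, vsub_add_vsub_cancel]
  rw [← dist_orthogonalProjection_eq_infDist, dist_eq_norm_vsub V, ← hf, hsplit, norm_add_sq_real,
    real_inner_smul_right, inner_add_left, real_inner_smul_left, hperp, real_inner_self_eq_norm_sq,
    norm_smul, mul_pow, Real.norm_eq_abs, sq_abs]
  ring

end InnerProductSpace

theorem eq_two_div_sqrt_three_of_sq {x : ℝ} (hx : 0 ≤ x) (h : 3 * x ^ 2 = 4) :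
    x = 2 / Real.sqrt 3 := by
  have h3 : Real.sqrt 3 ^ 2 = 3 := Real.sq_sqrt (by norm_num)
  rw [eq_div_iff (by positivity)]
  exact (sq_eq_sq₀ (by positivity) (by norm_num)).1 (by rw [mul_pow, h3]; linarith)

theorem dist_add_dist_eq_two_div_sqrt_three {V P : Type*} [NormedAddCommGroup V]
    [InnerProductSpace ℝ V] [FiniteDimensional ℝ V] [MetricSpace P] [NormedAddTorsor V P]
    (hV : finrank ℝ V = 2) {A B C D E F : P}
    (hABC : ∠ A B C = 2 * Real.pi / 3) (hBCD : ∠ B C D = 2 * Real.pi / 3)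
    (hCDE : ∠ C D E = 2 * Real.pi / 3) (hAB_DE : line[ℝ, A, B] ∥ line[ℝ, D, E])
    (hCD_FA : line[ℝ, C, D] ∥ line[ℝ, F, A]) (hC_FA : infDist C (line[ℝ, F, A] : Set P) = 1) :
    dist A B + dist B C = 2 / Real.sqrt 3 := by
  set u := B -ᵥ A
  set v := C -ᵥ B
  set w := D -ᵥ C
  set a := dist A B
  set b := dist B C
  set c := dist C D
  have ha : a ≠ 0 := dist_ne_zero.2 (ne_of_angle_eq_two_pi_div_three hABC).1
  have hb : b ≠ 0 := dist_ne_zero.2 (ne_of_angle_eq_two_pi_div_three hBCD).1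
  have hc : c ≠ 0 := dist_ne_zero.2 (ne_of_angle_eq_two_pi_div_three hCDE).1
  have hu : ‖u‖ = a := (dist_eq_norm_vsub' V A B).symm
  have hv : ‖v‖ = b := (dist_eq_norm_vsub' V B C).symm
  have hw : ‖w‖ = c := (dist_eq_norm_vsub' V C D).symm
  have huv : ⟪u, v⟫ = a * b / 2 := inner_vsub_vsub_of_angle_eq_two_pi_div_three hABC
  have hvw : ⟪v, w⟫ = b * c / 2 := inner_vsub_vsub_of_angle_eq_two_pi_div_three hBCD
  have huw : ⟪u, w⟫ = -(a * c / 2) := by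
    have hsq := sq_inner_vsub_vsub_of_angle_eq_two_pi_div_three_of_parallel hCDE hAB_DE
    have hgram := gram_det_eq_zero_of_finrank_eq_two hV u v w
    rw [hu, hv, hw, huv, hvw] at hgram
    have hfactor : a * b ^ 2 * c * (2 * ⟪u, w⟫ + a * c) = 0 := by
      linear_combination 4 * hgram + 4 * b ^ 2 * hsq
    have := (mul_eq_zero.1 hfactor).resolve_left (by simp [ha, hb, hc])
    linarith
  have hheight : c ^ 2 = ‖u + v‖ ^ 2 * c ^ 2 - ⟪u + v, w⟫ ^ 2 := by
    have := infDist_sq_mul_norm_sq_of_direction_eq_span (p := C) (x := w)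
      (right_mem_affineSpan_pair ℝ F A)
      (by rw [← hCD_FA.direction_eq, direction_affineSpan, vectorSpan_pair_rev])
    rwa [hC_FA, hw, ← vsub_add_vsub_cancel C B A, add_comm, one_pow, one_mul] at this
  rw [norm_add_sq_real, inner_add_left, hu, hv, huv, huw, hvw] at hheight
  apply eq_two_div_sqrt_three_of_sq (by positivity)
  refine mul_left_cancel₀ (pow_ne_zero 2 hc) ?_
  linear_combination -4 * hheight

theorem stmt1_general
    (A B C D E F : EuclideanSpace ℝ (Fin 2))
    (hABC : ∠ A B C = 2 * Real.pi / 3)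
    (hBCD : ∠ B C D = 2 * Real.pi / 3) (hCDE : ∠ C D E = 2 * Real.pi / 3)
    (hpar1 : line[ℝ, A, B] ∥ line[ℝ, D, E])
    (hpar3 : line[ℝ, C, D] ∥ line[ℝ, F, A])
    (hdist3 : Metric.infDist C (line[ℝ, F, A] : Set (EuclideanSpace ℝ (Fin 2))) = 1)
    (hle : dist A B ≤ dist B C) :
    dist A B + dist B C = 2 / Real.sqrt 3 ∧ dist A B ≤ 1 / Real.sqrt 3 := by
  have hsum := dist_add_dist_eq_two_div_sqrt_three finrank_euclideanSpace_fin hABC hBCD hCDE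
    hpar1 hpar3 hdist3
  refine ⟨hsum, ?_⟩
  have : 2 / Real.sqrt 3 = 2 * (1 / Real.sqrt 3) := by ring
  linarith

theorem stmt1
    (A B C D E F : EuclideanSpace ℝ (Fin 2))
    (hFAB : ∠ F A B = 2 * Real.pi / 3) (hABC : ∠ A B C = 2 * Real.pi / 3)
    (hBCD : ∠ B C D = 2 * Real.pi / 3) (hCDE : ∠ C D E = 2 * Real.pi / 3)
    (hDEF : ∠ D E F = 2 * Real.pi / 3) (hEFA : ∠ E F A = 2 * Real.pi / 3)
    (hpar1 : line[ℝ, A, B] ∥ line[ℝ, D, E])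
    (hpar2 : line[ℝ, B, C] ∥ line[ℝ, E, F])
    (hpar3 : line[ℝ, C, D] ∥ line[ℝ, F, A])
    (hdist1 : Metric.infDist A (line[ℝ, D, E] : Set (EuclideanSpace ℝ (Fin 2))) = 1)
    (hdist2 : Metric.infDist B (line[ℝ, E, F] : Set (EuclideanSpace ℝ (Fin 2))) = 1)
    (hdist3 : Metric.infDist C (line[ℝ, F, A] : Set (EuclideanSpace ℝ (Fin 2))) = 1)
    (hle : dist A B ≤ dist B C) :
    dist A B + dist B C = 2 / Real.sqrt 3 ∧ dist A B ≤ 1 / Real.sqrt 3 :=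
  stmt1_general A B C D E F hABC hBCD hCDE hpar1 hpar3 hdist3 hle
end

section
/- Any bounded subset of ℝ² with diameter 1 can be partitioned into three subsets, each of diameter strictly less than 1 (Borsuk's theorem in the plane). -/
/-!
Let `h` be the support function of `Φ` and, for an angle `θ`, let `u₀, u₁, u₂` be the unit
vectors at angles `θ, θ + 2π/3, θ + 4π/3`; they sum to zero and `∑ ⟪v, uₖ⟫² = 3/2 ‖v‖²`.
Since `θ ↦ ∑ h(uₖ)` is continuous and `2π`-periodic, the intermediate value theorem gives a `θ`
with `∑ h(uₖ) = ∑ h(-uₖ)`. Measured from the middle of the supporting strips (each of width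
at most `1`), the coordinates `pₖ(x) = ⟪x, uₖ⟫ - (h(uₖ) - h(-uₖ))/2` then satisfy `|pₖ| ≤ 1/2`
and `∑ pₖ = 0`, i.e. `Φ` lies in a regular hexagon of width `1`. Grouping the points by which
`pₖ` is smallest cuts this hexagon into three pentagons of diameter `√3/2 < 1`.
-/

open Real Metric
open scoped RealInnerProductSpace

section SupportFunction

variable {E : Type*} [NormedAddCommGroup E] [InnerProductSpace ℝ E] {Φ : Set E}

noncomputable def supportFunction (Φ : Set E) (u : E) : ℝ :=
  sSup ((fun x => ⟪x, u⟫) '' Φ)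

theorem bddAbove_inner_image (hΦ : Bornology.IsBounded Φ) (u : E) :
    BddAbove ((fun x => ⟪x, u⟫) '' Φ) := by
  obtain ⟨R, hR⟩ := hΦ.exists_norm_le
  refine ⟨R * ‖u‖, ?_⟩
  rintro _ ⟨x, hx, rfl⟩
  exact (real_inner_le_norm x u).trans (by gcongr; exact hR x hx)

theorem inner_le_supportFunction (hΦ : Bornology.IsBounded Φ) {x : E} (hx : x ∈ Φ) (u : E) :
    ⟪x, u⟫ ≤ supportFunction Φ u :=
  le_csSup (bddAbove_inner_image hΦ u) (Set.mem_image_of_mem _ hx)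

theorem supportFunction_le (hne : Φ.Nonempty) {u : E} {c : ℝ} (h : ∀ x ∈ Φ, ⟪x, u⟫ ≤ c) :
    supportFunction Φ u ≤ c :=
  csSup_le (hne.image _) (by rintro _ ⟨x, hx, rfl⟩; exact h x hx)

theorem supportFunction_add_neg_le (hΦ : Bornology.IsBounded Φ) (hne : Φ.Nonempty) (u : E) :
    supportFunction Φ u + supportFunction Φ (-u) ≤ diam Φ * ‖u‖ := by
  suffices ∀ y ∈ Φ, ⟪y, -u⟫ ≤ diam Φ * ‖u‖ - supportFunction Φ u by
    linarith [supportFunction_le hne this]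
  intro y hy
  suffices supportFunction Φ u ≤ diam Φ * ‖u‖ + ⟪y, u⟫ by rw [inner_neg_right]; linarith
  refine supportFunction_le hne fun x hx => ?_
  calc ⟪x, u⟫ = ⟪x - y, u⟫ + ⟪y, u⟫ := by rw [inner_sub_left]; ring
    _ ≤ ‖x - y‖ * ‖u‖ + ⟪y, u⟫ := by gcongr; exact real_inner_le_norm _ _
    _ ≤ diam Φ * ‖u‖ + ⟪y, u⟫ := by
      gcongr; rw [← dist_eq_norm]; exact dist_le_diam_of_mem hΦ hx hy

theorem abs_inner_sub_le_half_diam (hΦ : Bornology.IsBounded Φ) {x : E} (hx : x ∈ Φ) (u : E) :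
    |⟪x, u⟫ - (supportFunction Φ u - supportFunction Φ (-u)) / 2| ≤ diam Φ * ‖u‖ / 2 := by
  have hu := inner_le_supportFunction hΦ hx u
  have hnu := inner_le_supportFunction hΦ hx (-u)
  have hwidth := supportFunction_add_neg_le hΦ ⟨x, hx⟩ u
  rw [inner_neg_right] at hnu
  rw [abs_le]
  constructor <;> linarith

theorem lipschitzWith_supportFunction (hne : Φ.Nonempty) {R : ℝ} (hR : ∀ x ∈ Φ, ‖x‖ ≤ R) :
    LipschitzWith R.toNNReal (supportFunction Φ) := by
  have hΦ : Bornology.IsBounded Φ := isBounded_iff_forall_norm_le.2 ⟨R, hR⟩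
  refine LipschitzWith.of_le_add_mul' R fun u v => supportFunction_le hne fun x hx => ?_
  calc ⟪x, u⟫ = ⟪x, v⟫ + ⟪x, u - v⟫ := by rw [inner_sub_right]; ring
    _ ≤ supportFunction Φ v + R * dist u v := by
      gcongr
      · exact inner_le_supportFunction hΦ hx v
      · rw [dist_eq_norm]
        exact (real_inner_le_norm x _).trans (by gcongr; exact hR x hx)

theorem continuous_supportFunction (hΦ : Bornology.IsBounded Φ) (hne : Φ.Nonempty) :
    Continuous (supportFunction Φ) := by
  obtain ⟨R, hR⟩ := hΦ.exists_norm_le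
  exact (lipschitzWith_supportFunction hne hR).continuous

end SupportFunction

theorem Function.Periodic.exists_add_half_eq {g : ℝ → ℝ} {a : ℝ} (hg : Continuous g)
    (hper : Function.Periodic g (2 * a)) : ∃ x, g (x + a) = g x := by
  set f := fun x => g (x + a) - g x
  have hf : f a = -f 0 := by
    have : g (a + a) = g 0 := by rw [← two_mul, ← zero_add (2 * a), hper 0]
    simp only [f, this, zero_add]; ring
  have h0 : (0 : ℝ) ∈ Set.uIcc (f 0) (f a) := by
    rw [hf]; rcases le_total (f 0) 0 with h | h
    · exact Set.mem_uIcc.2 (Or.inl ⟨h, by linarith⟩)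
    · exact Set.mem_uIcc.2 (Or.inr ⟨by linarith, h⟩)
  obtain ⟨x, -, hx⟩ := intermediate_value_uIcc (by fun_prop) h0
  exact ⟨x, sub_eq_zero.1 hx⟩

noncomputable def dir (θ : ℝ) : EuclideanSpace ℝ (Fin 2) := !₂[cos θ, sin θ]

noncomputable def triad (θ : ℝ) (k : Fin 3) : EuclideanSpace ℝ (Fin 2) :=
  dir (θ + 2 * π * k / 3)

theorem inner_dir (x : EuclideanSpace ℝ (Fin 2)) (θ : ℝ) :
    ⟪x, dir θ⟫ = x 0 * cos θ + x 1 * sin θ := by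
  simp [dir, PiLp.inner_apply, Fin.sum_univ_two, mul_comm]

theorem norm_dir (θ : ℝ) : ‖dir θ‖ = 1 := by
  simp [dir, EuclideanSpace.norm_eq, Fin.sum_univ_two]

theorem dir_add_pi (θ : ℝ) : dir (θ + π) = -dir θ := by
  ext i; fin_cases i <;> simp [dir]

theorem dir_periodic : Function.Periodic dir (2 * π) := fun θ => by
  simp [dir]

theorem continuous_dir : Continuous dir := by
  unfold dir
  fun_prop

theorem triad_periodic (k : Fin 3) : Function.Periodic (triad · k) (2 * π) := fun θ => by
  simp only [triad, add_right_comm θ (2 * π), dir_periodic _]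

theorem triad_add_pi (θ : ℝ) (k : Fin 3) : triad (θ + π) k = -triad θ k := by
  simp only [triad, add_right_comm θ π, dir_add_pi]

theorem triad_zero (θ : ℝ) : triad θ 0 = dir θ := by
  simp [triad]

theorem triad_one (θ : ℝ) :
    triad θ 1 = !₂[-cos θ / 2 - √3 / 2 * sin θ, -sin θ / 2 + √3 / 2 * cos θ] := by
  rw [triad, dir, Fin.val_one, Nat.cast_one, show θ + 2 * π * 1 / 3 = θ - π / 3 + π by ring,
    cos_add_pi, sin_add_pi, cos_sub, sin_sub, cos_pi_div_three, sin_pi_div_three]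
  rw [WithLp.toLp.injEq, Matrix.vecCons_inj, Matrix.vecCons_inj]
  exact ⟨by ring, by ring, rfl⟩

theorem triad_two (θ : ℝ) :
    triad θ 2 = !₂[-cos θ / 2 + √3 / 2 * sin θ, -sin θ / 2 - √3 / 2 * cos θ] := by
  rw [triad, dir, Fin.val_two, Nat.cast_ofNat, show θ + 2 * π * 2 / 3 = θ + π / 3 + π by ring,
    cos_add_pi, sin_add_pi, cos_add, sin_add, cos_pi_div_three, sin_pi_div_three]
  rw [WithLp.toLp.injEq, Matrix.vecCons_inj, Matrix.vecCons_inj]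
  exact ⟨by ring, by ring, rfl⟩

theorem sum_triad (θ : ℝ) : ∑ k, triad θ k = 0 := by
  rw [Fin.sum_univ_three, triad_zero, triad_one, triad_two]
  ext i; fin_cases i <;>
    simp only [dir, Fin.zero_eta, Fin.mk_one, PiLp.add_apply, PiLp.zero_apply,
      Matrix.cons_val_zero, Matrix.cons_val_one, Matrix.cons_val_fin_one] <;> ring

theorem sum_inner_triad_sq (v : EuclideanSpace ℝ (Fin 2)) (θ : ℝ) :
    ∑ k, ⟪v, triad θ k⟫ ^ 2 = 3 / 2 * ‖v‖ ^ 2 := by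
  rw [Fin.sum_univ_three, triad_zero, triad_one, triad_two, inner_dir,
    EuclideanSpace.real_norm_sq_eq, Fin.sum_univ_two]
  simp only [PiLp.inner_apply, RCLike.inner_apply, conj_trivial, Fin.sum_univ_two,
    Matrix.cons_val_zero, Matrix.cons_val_one, Matrix.cons_val_fin_one]
  linear_combination (3 / 2 * (v 0 ^ 2 + v 1 ^ 2)) * sin_sq_add_cos_sq θ +
    ((v 1 * cos θ - v 0 * sin θ) ^ 2 / 2) * Real.sq_sqrt (show (0 : ℝ) ≤ 3 by norm_num)

theorem add_sq_add_sq_add_sq_le {A B : ℝ} (hA : |A| ≤ 3 / 4) (hB : |B| ≤ 3 / 4)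
    (hAB : |A + B| ≤ 1 / 2) : (A + B) ^ 2 + A ^ 2 + B ^ 2 ≤ 9 / 8 := by
  rw [abs_le] at hA hB hAB
  obtain ⟨hA₁, hA₂⟩ := hA
  obtain ⟨hB₁, hB₂⟩ := hB
  obtain ⟨hAB₁, hAB₂⟩ := hAB
  nlinarith [mul_nonneg (sub_nonneg.2 hA₂) (neg_le_iff_add_nonneg.1 hB₁),
    mul_nonneg (sub_nonneg.2 hB₂) (neg_le_iff_add_nonneg.1 hA₁),
    mul_nonneg (sub_nonneg.2 hA₂) (neg_le_iff_add_nonneg.1 hA₁),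
    mul_nonneg (sub_nonneg.2 hB₂) (neg_le_iff_add_nonneg.1 hB₁),
    mul_nonneg (sub_nonneg.2 hAB₂) (neg_le_iff_add_nonneg.1 hAB₁)]

theorem sum_sq_sub_le_of_min {a b c a' b' c' : ℝ} (hs : a + b + c = 0) (hs' : a' + b' + c' = 0)
    (hab : a ≤ b) (hac : a ≤ c) (hab' : a' ≤ b') (hac' : a' ≤ c')
    (ha : -(1 / 2) ≤ a) (hb : b ≤ 1 / 2) (hc : c ≤ 1 / 2)
    (ha' : -(1 / 2) ≤ a') (hb' : b' ≤ 1 / 2) (hc' : c' ≤ 1 / 2) :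
    (a - a') ^ 2 + (b - b') ^ 2 + (c - c') ^ 2 ≤ 9 / 8 := by
  have key := add_sq_add_sq_add_sq_le (A := b - b') (B := c - c')
    (abs_le.2 ⟨by linarith, by linarith⟩) (abs_le.2 ⟨by linarith, by linarith⟩)
    (abs_le.2 ⟨by linarith, by linarith⟩)
  rwa [show a - a' = -((b - b') + (c - c')) by linarith, neg_sq]

theorem sum_sq_sub_le_of_common_argmin {p q : Fin 3 → ℝ} (hp : ∑ i, p i = 0) (hq : ∑ i, q i = 0)
    (hp_le : ∀ i, |p i| ≤ 1 / 2) (hq_le : ∀ i, |q i| ≤ 1 / 2) {k : Fin 3}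
    (hpk : ∀ i, p k ≤ p i) (hqk : ∀ i, q k ≤ q i) :
    ∑ i, (p i - q i) ^ 2 ≤ 9 / 8 := by
  have hl := fun i => (abs_le.1 (hp_le i)).1
  have hu := fun i => (abs_le.1 (hp_le i)).2
  have hl' := fun i => (abs_le.1 (hq_le i)).1
  have hu' := fun i => (abs_le.1 (hq_le i)).2
  rw [Fin.sum_univ_three] at hp hq ⊢
  fin_cases k
  · exact sum_sq_sub_le_of_min hp hq (hpk 1) (hpk 2) (hqk 1) (hqk 2)
      (hl 0) (hu 1) (hu 2) (hl' 0) (hu' 1) (hu' 2)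
  · have := sum_sq_sub_le_of_min (a := p 1) (a' := q 1) (by linarith) (by linarith)
      (hpk 0) (hpk 2) (hqk 0) (hqk 2) (hl 1) (hu 0) (hu 2) (hl' 1) (hu' 0) (hu' 2)
    linarith
  · have := sum_sq_sub_le_of_min (a := p 2) (a' := q 2) (by linarith) (by linarith)
      (hpk 0) (hpk 1) (hqk 0) (hqk 1) (hl 2) (hu 0) (hu 1) (hl' 2) (hu' 0) (hu' 1)
    linarith

section Hexagon

variable {X : Type*}

def minPiece (Φ : Set X) (p : X → Fin 3 → ℝ) (k : Fin 3) : Set X :=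
  {x ∈ Φ | ∀ i, p x k ≤ p x i}

theorem iUnion_minPiece (Φ : Set X) (p : X → Fin 3 → ℝ) : ⋃ k, minPiece Φ p k = Φ := by
  refine Set.Subset.antisymm (Set.iUnion_subset fun k => Set.sep_subset _ _) fun x hx => ?_
  obtain ⟨k, -, hk⟩ := Finset.exists_min_image Finset.univ (p x) Finset.univ_nonempty
  exact Set.mem_iUnion.2 ⟨k, hx, fun i => hk i (Finset.mem_univ i)⟩

theorem diam_minPiece_le [PseudoMetricSpace X] {Φ : Set X} {p : X → Fin 3 → ℝ}
    (hsum : ∀ x ∈ Φ, ∑ i, p x i = 0) (hp : ∀ x ∈ Φ, ∀ i, |p x i| ≤ 1 / 2)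
    (hdist : ∀ x ∈ Φ, ∀ y ∈ Φ, 3 / 2 * dist x y ^ 2 ≤ ∑ i, (p x i - p y i) ^ 2) (k : Fin 3) :
    diam (minPiece Φ p k) ≤ √3 / 2 := by
  refine diam_le_of_forall_dist_le (by positivity) ?_
  rintro x ⟨hx, hxk⟩ y ⟨hy, hyk⟩
  have h := (hdist x hx y hy).trans
    (sum_sq_sub_le_of_common_argmin (hsum x hx) (hsum y hy) (hp x hx) (hp y hy) hxk hyk)
  nlinarith [Real.sq_sqrt (show (0 : ℝ) ≤ 3 by norm_num), Real.sqrt_nonneg 3,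
    dist_nonneg (x := x) (y := y)]

end Hexagon

theorem exists_balanced_triad {Φ : Set (EuclideanSpace ℝ (Fin 2))} (hΦ : Bornology.IsBounded Φ)
    (hne : Φ.Nonempty) :
    ∃ θ, ∑ k, supportFunction Φ (-triad θ k) = ∑ k, supportFunction Φ (triad θ k) := by
  set g := fun θ => ∑ k, supportFunction Φ (triad θ k)
  have hg : Continuous g := continuous_finsetSum _ fun k _ =>
    (continuous_supportFunction hΦ hne).comp (continuous_dir.comp (by fun_prop))
  have hper : Function.Periodic g (2 * π) := fun θ => by simp only [g, triad_periodic _ θ]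
  obtain ⟨θ, hθ⟩ := hper.exists_add_half_eq hg
  exact ⟨θ, by simpa only [g, triad_add_pi] using hθ⟩

theorem exists_three_pieces_diam_le {Φ : Set (EuclideanSpace ℝ (Fin 2))}
    (hΦ : Bornology.IsBounded Φ) (hne : Φ.Nonempty) (hd : diam Φ ≤ 1) :
    ∃ S₁ S₂ S₃ : Set (EuclideanSpace ℝ (Fin 2)), Φ = S₁ ∪ S₂ ∪ S₃ ∧
      diam S₁ ≤ √3 / 2 ∧ diam S₂ ≤ √3 / 2 ∧ diam S₃ ≤ √3 / 2 := by
  obtain ⟨θ, hθ⟩ := exists_balanced_triad hΦ hne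
  set h := supportFunction Φ
  set p := fun x k => ⟪x, triad θ k⟫ - (h (triad θ k) - h (-triad θ k)) / 2
  have hsum : ∀ x ∈ Φ, ∑ k, p x k = 0 := fun x _ => by
    simp only [p, Finset.sum_sub_distrib, ← inner_sum, sum_triad, inner_zero_right,
      ← Finset.sum_div, hθ, sub_self, zero_div]
  have hp : ∀ x ∈ Φ, ∀ k, |p x k| ≤ 1 / 2 := fun x hx k =>
    (abs_inner_sub_le_half_diam hΦ hx _).trans (by rw [triad, norm_dir]; linarith)
  have hdist : ∀ x ∈ Φ, ∀ y ∈ Φ, 3 / 2 * dist x y ^ 2 ≤ ∑ k, (p x k - p y k) ^ 2 :=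
    fun x _ y _ => le_of_eq <| by simp only [p, sub_sub_sub_cancel_right, ← inner_sub_left,
      sum_inner_triad_sq, dist_eq_norm]
  refine ⟨minPiece Φ p 0, minPiece Φ p 1, minPiece Φ p 2, ?_, ?_⟩
  · conv_lhs => rw [← iUnion_minPiece Φ p]
    ext x; simp [Fin.exists_fin_succ, or_assoc]
  · exact ⟨diam_minPiece_le hsum hp hdist 0, diam_minPiece_le hsum hp hdist 1,
      diam_minPiece_le hsum hp hdist 2⟩

theorem stmt6 (Φ : Set (EuclideanSpace ℝ (Fin 2))) (hbdd : Bornology.IsBounded Φ)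
    (hdiam : Metric.diam Φ = 1) :
    ∃ S₁ S₂ S₃ : Set (EuclideanSpace ℝ (Fin 2)),
      Φ = S₁ ∪ S₂ ∪ S₃ ∧
      Metric.diam S₁ < 1 ∧ Metric.diam S₂ < 1 ∧ Metric.diam S₃ < 1 := by
  have hne : Φ.Nonempty := Set.nonempty_iff_ne_empty.2 fun h => by simp [h] at hdiam
  obtain ⟨S₁, S₂, S₃, hΦ, h₁, h₂, h₃⟩ := exists_three_pieces_diam_le hbdd hne hdiam.le
  have hlt : √3 / 2 < 1 := by
    rw [div_lt_one two_pos, Real.sqrt_lt' two_pos]; norm_num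
  exact ⟨S₁, S₂, S₃, hΦ, h₁.trans_lt hlt, h₂.trans_lt hlt, h₃.trans_lt hlt⟩
end

section
/- Any bounded plane set of diameter 1 is contained in some hexagon all of whose angles are 120° and whose opposite sides are parallel at distance 1 (with one side's direction chosen arbitrarily). -/
/-!
Take unit normals `n₁, n₂, n₃` at mutual angles `2π/3` (so `n₁ + n₂ + n₃ = 0`) with `n₁ ⟂ v`.
Since `Φ` has diameter `1`, each `⟪·, nᵢ⟫` varies over `Φ` in an interval of length at most `1`, so
`Φ` lies in strips `|⟪·, nᵢ⟫ - tᵢ| ≤ 1/2`, with some freedom in the `tᵢ`. These three strips cut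
out a hexagon with all angles `2π/3` as soon as `|t₁ + t₂ + t₃| < 1/2`, and the freedom suffices
for this because `⟪x₁, n₁⟫ + ⟪x₂, n₂⟫ + ⟪x₃, n₃⟫ < 2` for all `xᵢ ∈ closure Φ`: the sum is
`⟪x₁ - x₃, n₁⟫ + ⟪x₂ - x₃, n₂⟫ ≤ 2`, with equality only if `x₁ - x₃ = n₁` and `x₂ - x₃ = n₂`,
which would put `x₁` and `x₂` at distance `√3`.
-/

open EuclideanGeometry Affine Metric
open scoped InnerProductSpace Pointwise

theorem norm_eq_one_of_real_inner_self_eq_one {V : Type*} [NormedAddCommGroup V]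
    [InnerProductSpace ℝ V] {x : V} (h : ⟪x, x⟫_ℝ = 1) : ‖x‖ = 1 := by
  rw [norm_eq_sqrt_real_inner, h, Real.sqrt_one]

section Tripod

variable {V : Type*} [NormedAddCommGroup V]

/-- Unit normals of three strips whose directions make angles of `60°` with each other. -/
structure IsUnitTripod (n₁ n₂ n₃ : V) : Prop where
  norm_fst : ‖n₁‖ = 1
  norm_snd : ‖n₂‖ = 1
  norm_thd : ‖n₃‖ = 1
  add_add_eq_zero : n₁ + n₂ + n₃ = 0

namespace IsUnitTripod

variable {n₁ n₂ n₃ : V}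

theorem neg (hT : IsUnitTripod n₁ n₂ n₃) : IsUnitTripod (-n₁) (-n₂) (-n₃) :=
  ⟨by rw [norm_neg, hT.norm_fst], by rw [norm_neg, hT.norm_snd], by rw [norm_neg, hT.norm_thd],
    by rw [← neg_add, ← neg_add, hT.add_add_eq_zero, neg_zero]⟩

theorem eq_neg_add (hT : IsUnitTripod n₁ n₂ n₃) : n₃ = -(n₁ + n₂) :=
  eq_neg_of_add_eq_zero_right hT.add_add_eq_zero

variable [InnerProductSpace ℝ V]

theorem inner_fst_snd (hT : IsUnitTripod n₁ n₂ n₃) : ⟪n₁, n₂⟫_ℝ = -(1 / 2) := by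
  have h := norm_add_sq_real n₁ n₂
  rw [← norm_neg, ← hT.eq_neg_add, hT.norm_fst, hT.norm_snd, hT.norm_thd] at h
  linarith

theorem inner_table (hT : IsUnitTripod n₁ n₂ n₃) :
    ⟪n₁, n₁⟫_ℝ = 1 ∧ ⟪n₂, n₂⟫_ℝ = 1 ∧ ⟪n₁, n₂⟫_ℝ = -(1 / 2) ∧ ⟪n₂, n₁⟫_ℝ = -(1 / 2) := by
  rw [real_inner_self_eq_norm_sq, real_inner_self_eq_norm_sq, hT.norm_fst, hT.norm_snd,
    real_inner_comm n₁ n₂, hT.inner_fst_snd]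
  norm_num

/-- `(2/3)(n₃ - n₂)` and `(2/3)(n₁ - n₃)` are, up to sign, the dual basis of `n₂, n₁`; they span
sides of the hexagons cut out by strips of width `1` normal to the `nᵢ`. -/
theorem inner_dual (hT : IsUnitTripod n₁ n₂ n₃) :
    ⟪(2 / 3 : ℝ) • (n₃ - n₂), n₁⟫_ℝ = 0 ∧ ⟪(2 / 3 : ℝ) • (n₃ - n₂), n₂⟫_ℝ = -1 ∧
    ⟪(2 / 3 : ℝ) • (n₁ - n₃), n₁⟫_ℝ = 1 ∧ ⟪(2 / 3 : ℝ) • (n₁ - n₃), n₂⟫_ℝ = 0 := by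
  obtain ⟨h₁₁, h₂₂, h₁₂, h₂₁⟩ := hT.inner_table
  rw [hT.eq_neg_add]
  simp only [inner_smul_left, inner_sub_left, inner_neg_left, inner_add_left, h₁₁, h₂₂, h₁₂, h₂₁]
  norm_num

theorem inner_dual_gram (hT : IsUnitTripod n₁ n₂ n₃) :
    ⟪(2 / 3 : ℝ) • (n₃ - n₂), (2 / 3 : ℝ) • (n₃ - n₂)⟫_ℝ = 4 / 3 ∧
    ⟪(2 / 3 : ℝ) • (n₁ - n₃), (2 / 3 : ℝ) • (n₁ - n₃)⟫_ℝ = 4 / 3 ∧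
    ⟪(2 / 3 : ℝ) • (n₃ - n₂), (2 / 3 : ℝ) • (n₁ - n₃)⟫_ℝ = -(2 / 3) := by
  obtain ⟨h₁₁, h₂₂, h₁₂, h₂₁⟩ := hT.inner_table
  rw [hT.eq_neg_add]
  simp only [inner_smul_left, inner_smul_right, inner_sub_left, inner_sub_right, inner_neg_left,
    inner_neg_right, inner_add_left, inner_add_right, h₁₁, h₂₂, h₁₂, h₂₁]
  norm_num

theorem eq_smul_add_smul [Fact (Module.finrank ℝ V = 2)] (hT : IsUnitTripod n₁ n₂ n₃) (q : V) :
    q = (-⟪q, n₂⟫_ℝ) • ((2 / 3 : ℝ) • (n₃ - n₂)) + ⟪q, n₁⟫_ℝ • ((2 / 3 : ℝ) • (n₁ - n₃)) := by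
  obtain ⟨h₁₁, h₂₂, h₁₂, h₂₁⟩ := hT.inner_table
  obtain ⟨e₁₁, e₁₂, e₃₁, e₃₂⟩ := hT.inner_dual
  have hli : LinearIndependent ℝ ![n₁, n₂] := by
    refine LinearIndependent.pair_iff.2 fun s t hst => ?_
    have i₁ := congrArg (fun x => ⟪x, n₁⟫_ℝ) hst
    have i₂ := congrArg (fun x => ⟪x, n₂⟫_ℝ) hst
    simp only [inner_add_left, inner_smul_left, h₁₁, h₂₂, h₁₂, h₂₁, inner_zero_left] at i₁ i₂
    constructor <;> norm_num at i₁ i₂ <;> linarith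
  have := FiniteDimensional.of_fact_finrank_eq_two (K := ℝ) (V := V)
  refine InnerProductSpace.ext_inner_right_basis (basisOfLinearIndependentOfCardEqFinrank hli
    (by rw [Fintype.card_fin, Fact.out (p := Module.finrank ℝ V = 2)])) fun i => ?_
  fin_cases i <;>
  simp [inner_add_left, inner_smul_left, e₁₁, e₁₂, e₃₁, e₃₂]

theorem exists_sub_eq_smul [Fact (Module.finrank ℝ V = 2)] {v : V} (hv : v ≠ 0) :
    ∃ n₁ n₂ n₃ : V, IsUnitTripod n₁ n₂ n₃ ∧ ∃ c : ℝ, n₃ - n₂ = c • v := by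
  have := FiniteDimensional.of_fact_finrank_eq_two (K := ℝ) (V := V)
  let o : Orientation ℝ V (Fin 2) :=
    (Module.finBasisOfFinrankEq ℝ V (Fact.out (p := Module.finrank ℝ V = 2))).orientation
  set u := ‖v‖⁻¹ • v
  set w := o.rightAngleRotation u
  have hu : ⟪u, u⟫_ℝ = 1 := by
    rw [real_inner_self_eq_norm_sq, show ‖u‖ = 1 from norm_smul_inv_norm hv, one_pow]
  have hw : ⟪w, w⟫_ℝ = 1 := by rw [o.inner_comp_rightAngleRotation, hu]
  have huw : ⟪u, w⟫_ℝ = 0 := by rw [real_inner_comm, o.inner_rightAngleRotation_self]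
  have hwu : ⟪w, u⟫_ℝ = 0 := o.inner_rightAngleRotation_self u
  have h3 : √3 * √3 = 3 := Real.mul_self_sqrt (by norm_num)
  refine ⟨w, -(√3 / 2) • u - (1 / 2 : ℝ) • w, (√3 / 2) • u - (1 / 2 : ℝ) • w,
    ⟨norm_eq_one_of_real_inner_self_eq_one hw, norm_eq_one_of_real_inner_self_eq_one ?_,
      norm_eq_one_of_real_inner_self_eq_one ?_, by module⟩,
    √3 * ‖v‖⁻¹, by rw [mul_smul]; module⟩ <;>
  · simp only [inner_sub_left, inner_sub_right, inner_smul_left, inner_smul_right, hu, hw, huw,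
      hwu]
    norm_num
    linear_combination h3 / 4

theorem inner_add_inner_add_inner_lt_two (hT : IsUnitTripod n₁ n₂ n₃) {x₁ x₂ x₃ : V}
    (h₁₂ : dist x₁ x₂ ≤ 1) (h₁₃ : dist x₁ x₃ ≤ 1) (h₂₃ : dist x₂ x₃ ≤ 1) :
    ⟪x₁, n₁⟫_ℝ + ⟪x₂, n₂⟫_ℝ + ⟪x₃, n₃⟫_ℝ < 2 := by
  rw [dist_eq_norm] at h₁₂ h₁₃ h₂₃
  have hsum : ⟪x₁, n₁⟫_ℝ + ⟪x₂, n₂⟫_ℝ + ⟪x₃, n₃⟫_ℝ = ⟪x₁ - x₃, n₁⟫_ℝ + ⟪x₂ - x₃, n₂⟫_ℝ := by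
    rw [hT.eq_neg_add, inner_neg_right, inner_add_right, inner_sub_left, inner_sub_left]; ring
  rw [hsum]
  by_contra! h
  have e₁ := norm_sub_sq_real (x₁ - x₃) n₁
  have e₂ := norm_sub_sq_real (x₂ - x₃) n₂
  rw [hT.norm_fst] at e₁
  rw [hT.norm_snd] at e₂
  have s₁ : ‖x₁ - x₃‖ ^ 2 ≤ 1 := pow_le_one₀ (norm_nonneg _) h₁₃
  have s₂ : ‖x₂ - x₃‖ ^ 2 ≤ 1 := pow_le_one₀ (norm_nonneg _) h₂₃
  have z₁ : ‖x₁ - x₃ - n₁‖ ^ 2 = 0 := by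
    nlinarith [sq_nonneg ‖x₁ - x₃ - n₁‖, sq_nonneg ‖x₂ - x₃ - n₂‖]
  have z₂ : ‖x₂ - x₃ - n₂‖ ^ 2 = 0 := by
    nlinarith [sq_nonneg ‖x₁ - x₃ - n₁‖, sq_nonneg ‖x₂ - x₃ - n₂‖]
  rw [sq_eq_zero_iff, norm_eq_zero, sub_eq_zero] at z₁ z₂
  have h3 := norm_sub_sq_real n₁ n₂
  rw [hT.norm_fst, hT.norm_snd, hT.inner_fst_snd, ← z₁, ← z₂, sub_sub_sub_cancel_right] at h3
  nlinarith [norm_nonneg (x₁ - x₂)]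

end IsUnitTripod

end Tripod

theorem exists_abs_add_add_lt {M₁ M₂ M₃ m₁ m₂ m₃ : ℝ} (h₁ : M₁ ≤ m₁ + 1) (h₂ : M₂ ≤ m₂ + 1)
    (h₃ : M₃ ≤ m₃ + 1) (hM : M₁ + M₂ + M₃ < 2) (hm : -2 < m₁ + m₂ + m₃) :
    ∃ t₁ t₂ t₃ : ℝ, |t₁ + t₂ + t₃| < 1 / 2 ∧ t₁ ∈ Set.Icc (M₁ - 1 / 2) (m₁ + 1 / 2) ∧
      t₂ ∈ Set.Icc (M₂ - 1 / 2) (m₂ + 1 / 2) ∧ t₃ ∈ Set.Icc (M₃ - 1 / 2) (m₃ + 1 / 2) := by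
  set σ := max (M₁ + M₂ + M₃ - 3 / 2) (min 0 (m₁ + m₂ + m₃ + 3 / 2))
  have hσ : σ ∈ Set.Icc (M₁ - 1 / 2) (m₁ + 1 / 2) + Set.Icc (M₂ - 1 / 2) (m₂ + 1 / 2) +
      Set.Icc (M₃ - 1 / 2) (m₃ + 1 / 2) := by
    rw [Set.Icc_add_Icc (by linarith) (by linarith), Set.Icc_add_Icc (by linarith) (by linarith)]
    constructor
    · linarith [le_max_left (M₁ + M₂ + M₃ - 3 / 2) (min 0 (m₁ + m₂ + m₃ + 3 / 2))]
    · exact max_le (by linarith) ((min_le_right _ _).trans (by linarith))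
  obtain ⟨_, ⟨t₁, ht₁, t₂, ht₂, rfl⟩, t₃, ht₃, hsum⟩ := hσ
  refine ⟨t₁, t₂, t₃, ?_, ht₁, ht₂, ht₃⟩
  change t₁ + t₂ + t₃ = σ at hsum
  rw [hsum, abs_lt]
  constructor
  · exact lt_max_of_lt_right (lt_min (by norm_num) (by linarith))
  · exact max_lt (by linarith) ((min_le_left _ _).trans_lt (by norm_num))

section Strips

variable {V : Type*} [NormedAddCommGroup V] [InnerProductSpace ℝ V]

theorem IsCompact.exists_forall_inner_mem_Icc {K : Set V} (hK : IsCompact K) (hne : K.Nonempty)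
    (n : V) : ∃ x ∈ K, ∃ y ∈ K, ∀ p ∈ K, ⟪p, n⟫_ℝ ∈ Set.Icc ⟪y, n⟫_ℝ ⟪x, n⟫_ℝ := by
  have hc : ContinuousOn (fun p : V => ⟪p, n⟫_ℝ) K :=
    (continuous_id.inner continuous_const).continuousOn
  obtain ⟨x, hx, hxmax⟩ := hK.exists_isMaxOn hne hc
  obtain ⟨y, hy, hymin⟩ := hK.exists_isMinOn hne hc
  exact ⟨x, hx, y, hy, fun p hp => ⟨hymin hp, hxmax hp⟩⟩

theorem IsUnitTripod.exists_strips [ProperSpace V] {n₁ n₂ n₃ : V} (hT : IsUnitTripod n₁ n₂ n₃)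
    {Φ : Set V} (hΦ : Bornology.IsBounded Φ) (hdiam : diam Φ ≤ 1) :
    ∃ t₁ t₂ t₃ : ℝ, |t₁ + t₂ + t₃| < 1 / 2 ∧ ∀ p ∈ Φ,
      |⟪p, n₁⟫_ℝ - t₁| ≤ 1 / 2 ∧ |⟪p, n₂⟫_ℝ - t₂| ≤ 1 / 2 ∧ |⟪p, n₃⟫_ℝ - t₃| ≤ 1 / 2 := by
  rcases Φ.eq_empty_or_nonempty with rfl | hne
  · exact ⟨0, 0, 0, by norm_num, fun p hp => hp.elim⟩
  set K := closure Φ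
  have hK : IsCompact K := hΦ.isCompact_closure
  have hdist : ∀ x ∈ K, ∀ y ∈ K, dist x y ≤ 1 := fun x hx y hy =>
    (dist_le_diam_of_mem hΦ.closure hx hy).trans (diam_closure Φ ▸ hdiam)
  have width : ∀ {x y n : V}, x ∈ K → y ∈ K → ‖n‖ = 1 → ⟪x, n⟫_ℝ ≤ ⟪y, n⟫_ℝ + 1 :=
    fun {x y n} hx hy hn => by
      have := real_inner_le_norm (x - y) n
      rw [inner_sub_left, hn, mul_one, ← dist_eq_norm] at this
      linarith [hdist x hx y hy]
  obtain ⟨x₁, hx₁, y₁, hy₁, h₁⟩ := hK.exists_forall_inner_mem_Icc hne.closure n₁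
  obtain ⟨x₂, hx₂, y₂, hy₂, h₂⟩ := hK.exists_forall_inner_mem_Icc hne.closure n₂
  obtain ⟨x₃, hx₃, y₃, hy₃, h₃⟩ := hK.exists_forall_inner_mem_Icc hne.closure n₃
  have hM := hT.inner_add_inner_add_inner_lt_two (hdist _ hx₁ _ hx₂) (hdist _ hx₁ _ hx₃)
    (hdist _ hx₂ _ hx₃)
  have hm := hT.neg.inner_add_inner_add_inner_lt_two (hdist _ hy₁ _ hy₂) (hdist _ hy₁ _ hy₃)
    (hdist _ hy₂ _ hy₃)
  simp only [inner_neg_right] at hm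
  obtain ⟨t₁, t₂, t₃, hs, ht₁, ht₂, ht₃⟩ := exists_abs_add_add_lt
    (width hx₁ hy₁ hT.norm_fst) (width hx₂ hy₂ hT.norm_snd) (width hx₃ hy₃ hT.norm_thd)
    hM (by linarith)
  refine ⟨t₁, t₂, t₃, hs, fun p hp => ?_⟩
  have hpK := subset_closure hp
  obtain ⟨l₁, u₁⟩ := h₁ p hpK
  obtain ⟨l₂, u₂⟩ := h₂ p hpK
  obtain ⟨l₃, u₃⟩ := h₃ p hpK
  simp only [abs_sub_le_iff]
  refine ⟨⟨?_, ?_⟩, ⟨?_, ?_⟩, ⟨?_, ?_⟩⟩ <;> linarith [ht₁.1, ht₁.2, ht₂.1, ht₂.2, ht₃.1, ht₃.2]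

end Strips

section Convex

variable {𝕜 E : Type*} [Field 𝕜] [LinearOrder 𝕜] [IsStrictOrderedRing 𝕜] [AddCommGroup E]
  [Module 𝕜 E]

theorem Convex.add_smul_mem_of_mem_Icc {s : Set E} (hs : Convex 𝕜 s) {p d : E} {a b x : 𝕜}
    (ha : p + a • d ∈ s) (hb : p + b • d ∈ s) (hx : x ∈ Set.Icc a b) : p + x • d ∈ s := by
  have hline : ∀ t : 𝕜, AffineMap.lineMap p (p + d) t = p + t • d := fun t => by
    rw [AffineMap.lineMap_apply_module', add_sub_cancel_left, add_comm]
  have hconv := hs.affine_preimage (AffineMap.lineMap p (p + d))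
  simpa only [Set.mem_preimage, hline] using
    hconv.ordConnected.out (by simpa only [Set.mem_preimage, hline] using ha)
      (by simpa only [Set.mem_preimage, hline] using hb) hx

theorem add_smul_add_smul_mem_convexHull_hexagon (A d₁ d₃ : E) {a b x y : 𝕜}
    (hab : a + b = 1) (hx : x ∈ Set.Icc 0 1) (hy : y ∈ Set.Icc 0 1)
    (hxy : x - y ∈ Set.Icc (-b) a) :
    A + x • d₁ + y • d₃ ∈ convexHull 𝕜
      {A, A + a • d₁, A + d₁ + b • d₃, A + d₁ + d₃, A + a • d₁ + d₃, A + b • d₃} := by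
  obtain rfl : a = 1 - b := eq_sub_of_add_eq hab
  set S := convexHull 𝕜
    {A, A + (1 - b) • d₁, A + d₁ + b • d₃, A + d₁ + d₃, A + (1 - b) • d₁ + d₃, A + b • d₃}
  have hS : Convex 𝕜 S := convex_convexHull 𝕜 _
  have vertex : ∀ {P : E}, P ∈ ({A, A + (1 - b) • d₁, A + d₁ + b • d₃, A + d₁ + d₃,
      A + (1 - b) • d₁ + d₃, A + b • d₃} : Set E) → P ∈ S := fun h => subset_convexHull 𝕜 _ h
  -- Cut the hexagon by the line through the vertices `A + d₁ + b • d₃` and `A + b • d₃`, and each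
  -- half into segments parallel to `d₁` whose ends lie on two sides of the hexagon.
  rcases le_total y b with hyb | hby
  · have left : A + y • d₃ ∈ S := hS.add_smul_mem_of_mem_Icc (a := 0) (b := b)
      (by simpa using vertex (by simp)) (vertex (by simp)) ⟨hy.1, hyb⟩
    have right : (A + (1 - b) • d₁) + y • (d₁ + d₃) ∈ S := hS.add_smul_mem_of_mem_Icc (a := 0)
      (b := b) (by simpa using vertex (by simp))
      (by convert vertex (P := A + d₁ + b • d₃) (by simp) using 1; module) ⟨hy.1, hyb⟩
    convert hS.add_smul_mem_of_mem_Icc (p := A + y • d₃) (d := d₁) (a := 0) (b := 1 - b + y)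
      (by simpa using left) (by convert right using 1; module)
      ⟨hx.1, by linarith [hxy.2]⟩ using 1
    module
  · have left : (A + b • d₃) + (y - b) • (d₁ + d₃) ∈ S := hS.add_smul_mem_of_mem_Icc (a := 0)
      (b := 1 - b) (by simpa using vertex (by simp))
      (by convert vertex (P := A + (1 - b) • d₁ + d₃) (by simp) using 1; module)
      ⟨by linarith, by linarith [hy.2]⟩
    have right : (A + d₁) + y • d₃ ∈ S := hS.add_smul_mem_of_mem_Icc (a := b) (b := 1)
      (vertex (by simp)) (by simpa using vertex (by simp)) ⟨hby, hy.2⟩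
    convert hS.add_smul_mem_of_mem_Icc (p := A + y • d₃) (d := d₁) (a := y - b) (b := 1)
      (by convert left using 1; module) (by convert right using 1; module)
      ⟨by linarith [hxy.1], hx.2⟩ using 1
    module

end Convex

section Euclidean

variable {V : Type*} [NormedAddCommGroup V] [InnerProductSpace ℝ V]

theorem angle_eq_two_pi_div_three_of_inner {x y : V} {c : ℝ} (hc : 0 < c) (hxx : ⟪x, x⟫_ℝ = c)
    (hyy : ⟪y, y⟫_ℝ = c) (hxy : ⟪x, y⟫_ℝ = -(c / 2)) :
    InnerProductGeometry.angle x y = 2 * Real.pi / 3 := by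
  have hnorm : ‖x‖ * ‖y‖ = c := by
    rw [norm_eq_sqrt_real_inner, norm_eq_sqrt_real_inner, hxx, hyy, Real.mul_self_sqrt hc.le]
  rw [InnerProductGeometry.angle, hnorm, hxy, neg_div, div_div_cancel_left' hc.ne',
    Real.arccos_neg, inv_eq_one_div, ← Real.cos_pi_div_three,
    Real.arccos_cos (by positivity) (by linarith [Real.pi_pos])]
  ring

theorem affineSpan_pair_parallel_of_sub_eq_smul {p₁ q₁ p₂ q₂ d : V} {r s : ℝ} (hr : r ≠ 0)
    (hs : s ≠ 0) (h₁ : q₁ - p₁ = r • d) (h₂ : q₂ - p₂ = s • d) :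
    line[ℝ, p₁, q₁] ∥ line[ℝ, p₂, q₂] := by
  rw [AffineSubspace.affineSpan_pair_parallel_iff_vectorSpan_eq, vectorSpan_pair_rev,
    vectorSpan_pair_rev, vsub_eq_sub, vsub_eq_sub, h₁, h₂,
    Submodule.span_singleton_smul_eq (IsUnit.mk0 _ hr),
    Submodule.span_singleton_smul_eq (IsUnit.mk0 _ hs)]

theorem infDist_affineSpan_pair_eq_norm {X P Q d n : V} {c α : ℝ} (hc : c ≠ 0)
    (hQ : Q - P = c • d) (hX : X - P = α • d + n) (hdn : ⟪d, n⟫_ℝ = 0) :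
    infDist X (line[ℝ, P, Q] : Set V) = ‖n‖ := by
  obtain rfl : Q = P + c • d := eq_add_of_sub_eq' hQ
  obtain rfl : X = P + (α • d + n) := eq_add_of_sub_eq' hX
  have mem : ∀ γ : ℝ, P + γ • d ∈ line[ℝ, P, P + c • d] := fun γ => by
    refine mem_affineSpan_pair_iff_exists_lineMap_eq.2 ⟨γ / c, ?_⟩
    rw [AffineMap.lineMap_apply_module', add_sub_cancel_left, smul_smul, div_mul_cancel₀ _ hc,
      add_comm]
  refine le_antisymm ?_ ?_
  · refine (infDist_le_dist_of_mem (mem α)).trans_eq ?_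
    rw [dist_eq_norm, add_sub_add_left_eq_sub, add_sub_cancel_left]
  · refine (le_infDist ⟨P, left_mem_affineSpan_pair ℝ _ _⟩).2 fun y hy => ?_
    obtain ⟨γ, rfl⟩ := mem_affineSpan_pair_iff_exists_lineMap_eq.1 hy
    rw [AffineMap.lineMap_apply_module', add_sub_cancel_left, smul_smul, dist_eq_norm,
      show P + (α • d + n) - ((γ * c) • d + P) = (α - γ * c) • d + n by module]
    have hpyth := norm_add_sq_eq_norm_sq_add_norm_sq_real (x := (α - γ * c) • d) (y := n)
      (by rw [real_inner_smul_left, hdn, mul_zero])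
    nlinarith [norm_nonneg ((α - γ * c) • d + n), norm_nonneg n,
      mul_self_nonneg ‖(α - γ * c) • d‖]

theorem angle_hexagon_eq_two_pi_div_three {A d₁ d₃ : V} (h₁ : ⟪d₁, d₁⟫_ℝ = 4 / 3)
    (h₃ : ⟪d₃, d₃⟫_ℝ = 4 / 3) (h₁₃ : ⟪d₁, d₃⟫_ℝ = -(2 / 3)) {a b : ℝ} (ha : 0 < a) (hb : 0 < b)
    (hab : a + b = 1) :
    ∠ (A + b • d₃) A (A + a • d₁) = 2 * Real.pi / 3 ∧
    ∠ A (A + a • d₁) (A + d₁ + b • d₃) = 2 * Real.pi / 3 ∧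
    ∠ (A + a • d₁) (A + d₁ + b • d₃) (A + d₁ + d₃) = 2 * Real.pi / 3 ∧
    ∠ (A + d₁ + b • d₃) (A + d₁ + d₃) (A + a • d₁ + d₃) = 2 * Real.pi / 3 ∧
    ∠ (A + d₁ + d₃) (A + a • d₁ + d₃) (A + b • d₃) = 2 * Real.pi / 3 ∧
    ∠ (A + a • d₁ + d₃) (A + b • d₃) A = 2 * Real.pi / 3 := by
  obtain rfl : a = 1 - b := eq_sub_of_add_eq hab
  have key : ∀ {P Q R x y : V} {r s : ℝ}, 0 < r → 0 < s → P - Q = r • x → R - Q = s • y →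
      ⟪x, x⟫_ℝ = 4 / 3 → ⟪y, y⟫_ℝ = 4 / 3 → ⟪x, y⟫_ℝ = -(2 / 3) →
      ∠ P Q R = 2 * Real.pi / 3 := fun hr hs hP hR hxx hyy hxy => by
    rw [EuclideanGeometry.angle, vsub_eq_sub, vsub_eq_sub, hP, hR,
      InnerProductGeometry.angle_smul_left_of_pos _ _ hr,
      InnerProductGeometry.angle_smul_right_of_pos _ _ hs]
    exact angle_eq_two_pi_div_three_of_inner (by norm_num) hxx hyy (by rw [hxy]; norm_num)
  have h₃₁ : ⟪d₃, d₁⟫_ℝ = -(2 / 3) := by rw [real_inner_comm, h₁₃]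
  refine ⟨key hb ha (x := d₃) (y := d₁) ?_ ?_ ?_ ?_ ?_,
    key ha hb (x := -d₁) (y := d₁ + d₃) ?_ ?_ ?_ ?_ ?_,
    key hb ha (x := -(d₁ + d₃)) (y := d₃) ?_ ?_ ?_ ?_ ?_,
    key ha hb (x := -d₃) (y := -d₁) ?_ ?_ ?_ ?_ ?_,
    key hb ha (x := d₁) (y := -(d₁ + d₃)) ?_ ?_ ?_ ?_ ?_,
    key ha hb (x := d₁ + d₃) (y := -d₃) ?_ ?_ ?_ ?_ ?_⟩ <;>
  first
  | module
  | simp only [inner_add_left, inner_add_right, inner_neg_left, inner_neg_right, neg_neg, h₁, h₃,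
      h₁₃, h₃₁]
    try norm_num

theorem parallel_hexagon_opposite_sides (A d₁ d₃ : V) {a b : ℝ} (ha : a ≠ 0) (hb : b ≠ 0)
    (hab : a + b = 1) :
    line[ℝ, A, A + a • d₁] ∥ line[ℝ, A + d₁ + d₃, A + a • d₁ + d₃] ∧
    line[ℝ, A + a • d₁, A + d₁ + b • d₃] ∥ line[ℝ, A + a • d₁ + d₃, A + b • d₃] ∧
    line[ℝ, A + d₁ + b • d₃, A + d₁ + d₃] ∥ line[ℝ, A + b • d₃, A] := by
  obtain rfl : a = 1 - b := eq_sub_of_add_eq hab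
  exact ⟨affineSpan_pair_parallel_of_sub_eq_smul ha (neg_ne_zero.2 hb) (d := d₁)
      (by module) (by module),
    affineSpan_pair_parallel_of_sub_eq_smul hb (neg_ne_zero.2 ha) (d := d₁ + d₃)
      (by module) (by module),
    affineSpan_pair_parallel_of_sub_eq_smul ha (neg_ne_zero.2 hb) (d := d₃)
      (by module) (by module)⟩

theorem infDist_hexagon_opposite_side_eq_one {A d₁ d₃ : V} (h₁ : ⟪d₁, d₁⟫_ℝ = 4 / 3)
    (h₃ : ⟪d₃, d₃⟫_ℝ = 4 / 3) (h₁₃ : ⟪d₁, d₃⟫_ℝ = -(2 / 3)) {a b : ℝ} (ha : a ≠ 0) (hb : b ≠ 0)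
    (hab : a + b = 1) :
    infDist A (line[ℝ, A + d₁ + d₃, A + a • d₁ + d₃] : Set V) = 1 ∧
    infDist (A + a • d₁) (line[ℝ, A + a • d₁ + d₃, A + b • d₃] : Set V) = 1 ∧
    infDist (A + d₁ + b • d₃) (line[ℝ, A + b • d₃, A] : Set V) = 1 := by
  obtain rfl : a = 1 - b := eq_sub_of_add_eq hab
  have h₃₁ : ⟪d₃, d₁⟫_ℝ = -(2 / 3) := by rw [real_inner_comm, h₁₃]
  refine ⟨(infDist_affineSpan_pair_eq_norm (neg_ne_zero.2 hb) (d := d₁) (α := -(1 / 2))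
      (n := -((1 / 2 : ℝ) • d₁ + d₃)) (by module) (by module) ?_).trans
      (norm_eq_one_of_real_inner_self_eq_one ?_),
    (infDist_affineSpan_pair_eq_norm (neg_ne_zero.2 ha) (d := d₁ + d₃) (α := -(1 / 2))
      (n := (1 / 2 : ℝ) • (d₁ - d₃)) (by module) (by module) ?_).trans
      (norm_eq_one_of_real_inner_self_eq_one ?_),
    (infDist_affineSpan_pair_eq_norm (neg_ne_zero.2 hb) (d := d₃) (α := -(1 / 2))
      (n := d₁ + (1 / 2 : ℝ) • d₃) (by module) (by module) ?_).trans
      (norm_eq_one_of_real_inner_self_eq_one ?_)⟩ <;>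
  · simp only [inner_add_left, inner_add_right, inner_sub_left, inner_sub_right, inner_neg_left,
      inner_neg_right, inner_smul_left, inner_smul_right, h₁, h₃, h₁₃, h₃₁]
    norm_num

end Euclidean

theorem stmt7 (Φ : Set (EuclideanSpace ℝ (Fin 2))) (hbdd : Bornology.IsBounded Φ)
    (hdiam : Metric.diam Φ = 1) (v : EuclideanSpace ℝ (Fin 2)) (hv : v ≠ 0) :
    ∃ A B C D E F : EuclideanSpace ℝ (Fin 2),
      (∠ F A B = 2 * Real.pi / 3 ∧ ∠ A B C = 2 * Real.pi / 3 ∧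
       ∠ B C D = 2 * Real.pi / 3 ∧ ∠ C D E = 2 * Real.pi / 3 ∧
       ∠ D E F = 2 * Real.pi / 3 ∧ ∠ E F A = 2 * Real.pi / 3) ∧
      (line[ℝ, A, B] ∥ line[ℝ, D, E] ∧ line[ℝ, B, C] ∥ line[ℝ, E, F] ∧
       line[ℝ, C, D] ∥ line[ℝ, F, A]) ∧
      (Metric.infDist A (line[ℝ, D, E] : Set (EuclideanSpace ℝ (Fin 2))) = 1 ∧
       Metric.infDist B (line[ℝ, E, F] : Set (EuclideanSpace ℝ (Fin 2))) = 1 ∧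
       Metric.infDist C (line[ℝ, F, A] : Set (EuclideanSpace ℝ (Fin 2))) = 1) ∧
      (∃ t : ℝ, B - A = t • v) ∧
      Φ ⊆ convexHull ℝ {A, B, C, D, E, F} := by
  have : Fact (Module.finrank ℝ (EuclideanSpace ℝ (Fin 2)) = 2) := ⟨finrank_euclideanSpace_fin⟩
  obtain ⟨n₁, n₂, n₃, hT, c, hc⟩ := IsUnitTripod.exists_sub_eq_smul hv
  obtain ⟨t₁, t₂, t₃, hs, hΦ⟩ := hT.exists_strips hbdd hdiam.le
  obtain ⟨h₁, h₃, h₁₃⟩ := hT.inner_dual_gram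
  obtain ⟨e₁₁, e₁₂, e₃₁, e₃₂⟩ := hT.inner_dual
  set d₁ := (2 / 3 : ℝ) • (n₃ - n₂) with hd₁
  set d₃ := (2 / 3 : ℝ) • (n₁ - n₃)
  obtain ⟨hs₁, hs₂⟩ := abs_lt.1 hs
  set a := t₁ + t₂ + t₃ + 1 / 2 with ha_def
  set b := 1 / 2 - (t₁ + t₂ + t₃) with hb_def
  have ha : 0 < a := by linarith
  have hb : 0 < b := by linarith
  have hab : a + b = 1 := by linarith
  set A := -(t₂ + 1 / 2) • d₁ + (t₁ - 1 / 2) • d₃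
  refine ⟨A, A + a • d₁, A + d₁ + b • d₃, A + d₁ + d₃, A + a • d₁ + d₃, A + b • d₃,
    angle_hexagon_eq_two_pi_div_three h₁ h₃ h₁₃ ha hb hab,
    parallel_hexagon_opposite_sides A d₁ d₃ ha.ne' hb.ne' hab,
    infDist_hexagon_opposite_side_eq_one h₁ h₃ h₁₃ ha.ne' hb.ne' hab,
    ⟨a * (2 / 3) * c, by rw [add_sub_cancel_left, hd₁, hc, smul_smul, smul_smul]⟩, fun p hp => ?_⟩
  -- In the frame `A; d₁, d₃` the hexagon is `0 ≤ x, y ≤ 1, -b ≤ x - y ≤ a`.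
  obtain ⟨hp₁, hp₂, hp₃⟩ := hΦ p hp
  have hA₁ : ⟪A, n₁⟫_ℝ = t₁ - 1 / 2 := by simp [A, inner_add_left, inner_smul_left, e₁₁, e₃₁]
  have hA₂ : ⟪A, n₂⟫_ℝ = t₂ + 1 / 2 := by simp [A, inner_add_left, inner_smul_left, e₁₂, e₃₂]
  have hp : ⟪p, n₃⟫_ℝ = -(⟪p, n₁⟫_ℝ + ⟪p, n₂⟫_ℝ) := by
    rw [hT.eq_neg_add, inner_neg_right, inner_add_right]
  rw [← add_sub_cancel A p, hT.eq_smul_add_smul (p - A), ← add_assoc]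
  rw [abs_sub_le_iff] at hp₁ hp₂ hp₃
  refine add_smul_add_smul_mem_convexHull_hexagon A d₁ d₃ hab ?_ ?_ ?_ <;>
    simp only [inner_sub_left, hA₁, hA₂, Set.mem_Icc] <;> constructor <;> linarith
end

section
/- A regular hexagon with distance 1 between opposite sides can be partitioned into three congruent pentagons, each of diameter √3/2 (which is less than 1). -/
/-!
With the centre at the origin, let `a` and `b` be the vertices `V 0` and `V 2`. The hexagon is the
convex hull of `±a, ±b, ±(a + b)`; in the coordinates `x = p • a + q • b` it is
`|p|, |q|, |p - q| ≤ 1`, the union of the three rhombi spanned by `(a, b)`, `(b, -a - b)` and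
`(-a - b, a)`. The segment from `0` to the midpoint of `[a, a + b]` cuts the first rhombus into a
piece of the pentagon `P(a, b)` with vertices `0, a + b/2, a + b, b, (b - a)/2` and a piece of
`P(-a - b, a)`. The rotation by `2π/3` maps `a ↦ b ↦ -a - b ↦ a`, so it cycles the rhombi and the
pentagons: the three pentagons are congruent and cover the hexagon. The longest distance in a
pentagon is the one between its two side midpoints, `√3/2`.
-/

open EuclideanGeometry Affine Metric

open Real Set

section AffineHexagon

variable {E F : Type*} [AddCommGroup E] [Module ℝ E] [AddCommGroup F] [Module ℝ F]

lemma exists_weights_of_mem_convexHull_range {ι : Type*} [Fintype ι] {v : ι → E} {x : E}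
    (hx : x ∈ convexHull ℝ (range v)) :
    ∃ w : ι → ℝ, (∀ i, 0 ≤ w i) ∧ ∑ i, w i = 1 ∧ ∑ i, w i • v i = x := by
  classical
  have hv : range v = Fintype.linearCombination ℝ v '' range fun i => Pi.single i 1 := by
    rw [← range_comp]
    congr 1
    ext i
    simp [Fintype.linearCombination_apply_single]
  rw [hv, ← LinearMap.image_convexHull, convexHull_rangle_single_eq_stdSimplex] at hx
  obtain ⟨w, ⟨hw₀, hw₁⟩, rfl⟩ := hx
  exact ⟨w, hw₀, hw₁, rfl⟩

lemma smul_add_smul_mem_convexHull {s : Set E} {u v : E} (h₀ : 0 ∈ s) (hu : u ∈ s) (hv : v ∈ s)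
    {c d : ℝ} (hc : 0 ≤ c) (hd : 0 ≤ d) (hcd : c + d ≤ 1) : c • u + d • v ∈ convexHull ℝ s := by
  refine mem_convexHull_of_exists_fintype ![c, d, 1 - (c + d)] ![u, v, 0] ?_ ?_ ?_ ?_
  · intro i
    fin_cases i <;> simp [hc, hd, hcd]
  · simp [Fin.sum_univ_three]
  · intro i
    fin_cases i <;> assumption
  · simp [Fin.sum_univ_three]

def hexagonVertex (a b : E) : Fin 6 → E := ![a, a + b, b, -a, -a - b, -b]

noncomputable def pentagonVertex (a b : E) : Fin 5 → E :=
  ![0, a + (2 : ℝ)⁻¹ • b, a + b, b, (2 : ℝ)⁻¹ • (b - a)]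

def hexagon (a b : E) : Set E := convexHull ℝ (range (hexagonVertex a b))

def pentagon (a b : E) : Set E := convexHull ℝ (range (pentagonVertex a b))

lemma pentagon_subset_of_convex {C : Set E} (hC : Convex ℝ C) {a b : E} (ha : a ∈ C)
    (hab : a + b ∈ C) (hb : b ∈ C) (hna : -a ∈ C) : pentagon a b ⊆ C := by
  have mid {x y z : E} (hx : x ∈ C) (hy : y ∈ C) (hz : z = (2 : ℝ)⁻¹ • x + (2 : ℝ)⁻¹ • y) :
      z ∈ C :=
    hz ▸ hC hx hy (by norm_num) (by norm_num) (by norm_num)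
  refine convexHull_min (range_subset_iff.2 fun i => ?_) hC
  fin_cases i
  · exact mid ha hna (by change (0 : E) = _; module)
  · exact mid ha hab (by change a + (2 : ℝ)⁻¹ • b = _; module)
  · exact hab
  · exact hb
  · exact mid hb hna (by change (2 : ℝ)⁻¹ • (b - a) = _; module)

lemma smul_add_smul_mem_pentagon_union {a b : E} {p q : ℝ} (hp₀ : 0 ≤ p) (hp₁ : p ≤ 1)
    (hq₀ : 0 ≤ q) (hq₁ : q ≤ 1) : p • a + q • b ∈ pentagon a b ∪ pentagon (-a - b) a := by
  have h₀ : (0 : E) ∈ range (pentagonVertex a b) := ⟨0, rfl⟩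
  rcases le_total p q with hpq | hqp
  · left
    rw [show p • a + q • b = p • (a + b) + (q - p) • b by module]
    exact smul_add_smul_mem_convexHull h₀ ⟨2, rfl⟩ ⟨3, rfl⟩ hp₀ (by linarith) (by linarith)
  rcases le_total p (2 * q) with hp | hp
  · left
    rw [show p • a + q • b = (2 * (p - q)) • (a + (2 : ℝ)⁻¹ • b) + (2 * q - p) • (a + b) by
      module]
    exact smul_add_smul_mem_convexHull h₀ ⟨1, rfl⟩ ⟨2, rfl⟩ (by linarith) (by linarith)
      (by linarith)
  · right
    rw [show p • a + q • b = (p - 2 * q) • a + (2 * q) • (a + (2 : ℝ)⁻¹ • b) by module]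
    exact smul_add_smul_mem_convexHull (s := range (pentagonVertex (-a - b) a)) (u := a)
      (v := a + (2 : ℝ)⁻¹ • b) ⟨0, rfl⟩ ⟨3, rfl⟩
      ⟨4, by change (2 : ℝ)⁻¹ • (a - (-a - b)) = _; module⟩
      (by linarith) (by linarith) (by linarith)

lemma exists_coords_of_mem_hexagon {a b x : E} (hx : x ∈ hexagon a b) :
    ∃ p q : ℝ, -1 ≤ p ∧ p ≤ 1 ∧ -1 ≤ q ∧ q ≤ 1 ∧ -1 ≤ p - q ∧ p - q ≤ 1 ∧
      x = p • a + q • b := by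
  obtain ⟨w, hw₀, hw₁, rfl⟩ := exists_weights_of_mem_convexHull_range hx
  rw [Fin.sum_univ_six] at hw₁ ⊢
  have := hw₀ 0; have := hw₀ 1; have := hw₀ 2; have := hw₀ 3; have := hw₀ 4; have := hw₀ 5
  refine ⟨w 0 + w 1 - w 3 - w 4, w 1 + w 2 - w 4 - w 5, by linarith, by linarith, by linarith,
    by linarith, by linarith, by linarith, ?_⟩
  change w 0 • a + w 1 • (a + b) + w 2 • b + w 3 • (-a) + w 4 • (-a - b) + w 5 • (-b) = _
  module

theorem hexagon_eq_union_pentagon (a b : E) :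
    hexagon a b = pentagon a b ∪ pentagon b (-a - b) ∪ pentagon (-a - b) a := by
  apply Subset.antisymm
  · intro x hx
    obtain ⟨p, q, hp₀, hp₁, hq₀, hq₁, hpq₀, hpq₁, rfl⟩ := exists_coords_of_mem_hexagon hx
    simp only [mem_union]
    rcases le_total p q with hpq | hqp
    · rcases le_total 0 p with hp | hp
      · have := smul_add_smul_mem_pentagon_union (a := a) (b := b) hp hp₁ (hp.trans hpq) hq₁
        simp only [mem_union] at this
        tauto
      · have := smul_add_smul_mem_pentagon_union (a := b) (b := -a - b) (sub_nonneg.2 hpq)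
          (by linarith) (neg_nonneg.2 hp) (by linarith)
        rw [show (q - p) • b + (-p) • (-a - b) = p • a + q • b by module,
          show -b - (-a - b) = a by abel, mem_union] at this
        tauto
    · rcases le_total 0 q with hq | hq
      · have := smul_add_smul_mem_pentagon_union (a := a) (b := b) (hq.trans hqp) hp₁ hq hq₁
        simp only [mem_union] at this
        tauto
      · have := smul_add_smul_mem_pentagon_union (a := -a - b) (b := a) (neg_nonneg.2 hq)
          (by linarith) (sub_nonneg.2 hqp) (by linarith)
        rw [show (-q) • (-a - b) + (p - q) • a = p • a + q • b by module,
          show -(-a - b) - a = b by abel, mem_union] at this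
        tauto
  · have hC : Convex ℝ (hexagon a b) := convex_convexHull ℝ _
    have mem (i : Fin 6) {y : E} (h : hexagonVertex a b i = y) : y ∈ hexagon a b :=
      subset_convexHull ℝ _ ⟨i, h⟩
    refine union_subset (union_subset ?_ ?_) ?_
    · exact pentagon_subset_of_convex hC (mem 0 rfl) (mem 1 rfl) (mem 2 rfl) (mem 3 rfl)
    · exact pentagon_subset_of_convex hC (mem 2 rfl) (mem 3 (by change -a = _; abel)) (mem 4 rfl)
        (mem 5 rfl)
    · exact pentagon_subset_of_convex hC (mem 4 rfl) (mem 5 (by change -b = _; abel)) (mem 0 rfl)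
        (mem 1 (by change a + b = _; abel))

lemma image_pentagon {𝓕 : Type*} [FunLike 𝓕 E F] [LinearMapClass 𝓕 ℝ E F] (f : 𝓕) (a b : E) :
    f '' pentagon a b = pentagon (f a) (f b) := by
  calc f '' pentagon a b = convexHull ℝ (f '' range (pentagonVertex a b)) :=
        LinearMap.image_convexHull (f : E →ₗ[ℝ] F) _
    _ = pentagon (f a) (f b) := by
        rw [← range_comp]
        congr 2
        funext i
        fin_cases i <;> simp [pentagonVertex]

end AffineHexagon

section RegularHexagon

local notation "ℝ²" => EuclideanSpace ℝ (Fin 2)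

lemma cos_two_mul_pi_div_three : cos (2 * (π / 3)) = -(1 / 2) := by
  rw [show 2 * (π / 3) = π - π / 3 by ring, cos_pi_sub, cos_pi_div_three]

lemma sin_two_mul_pi_div_three : sin (2 * (π / 3)) = √3 / 2 := by
  rw [show 2 * (π / 3) = π - π / 3 by ring, sin_pi_sub, sin_pi_div_three]

noncomputable def hex₀ : ℝ² := !₂[√3 / 3, 0]

noncomputable def hex₂ : ℝ² := !₂[-(√3 / 6), 1 / 2]

lemma hexagonVertex_hex₀_hex₂ (i : Fin 6) :
    hexagonVertex hex₀ hex₂ i = !₂[1 / √3 * cos (i * (π / 3)), 1 / √3 * sin (i * (π / 3))] := by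
  have hs : √3 ^ 2 = 3 := sq_sqrt (by norm_num)
  have h3 : 3 * (π / 3) = π := by ring
  have h4 : 4 * (π / 3) = π / 3 + π := by ring
  have h5 : 5 * (π / 3) = 2 * (π / 3) + π := by ring
  fin_cases i <;> ext j <;> fin_cases j <;>
    simp [hexagonVertex, hex₀, hex₂, h3, h4, h5, cos_add_pi, sin_add_pi,
      cos_two_mul_pi_div_three, sin_two_mul_pi_div_three] <;>
    field_simp <;> linarith [hs]

noncomputable def planeRotation (θ : ℝ) : ℝ² ≃ₗᵢ[ℝ] ℝ² :=
  Complex.orthonormalBasisOneI.repr.symm.trans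
    ((rotation (Circle.exp θ)).trans Complex.orthonormalBasisOneI.repr)

lemma planeRotation_apply (θ : ℝ) (x : ℝ²) :
    planeRotation θ x = !₂[cos θ * x 0 - sin θ * x 1, sin θ * x 0 + cos θ * x 1] := by
  ext i
  fin_cases i <;>
    simp [planeRotation, Complex.exp_ofReal_mul_I_re, Complex.exp_ofReal_mul_I_im, add_comm]

lemma planeRotation_hex₀ : planeRotation (2 * (π / 3)) hex₀ = hex₂ := by
  have hs : √3 ^ 2 = 3 := sq_sqrt (by norm_num)
  ext i
  fin_cases i <;>
    simp [planeRotation_apply, hex₀, hex₂, cos_two_mul_pi_div_three, sin_two_mul_pi_div_three] <;>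
    linarith [hs]

lemma planeRotation_hex₂ : planeRotation (2 * (π / 3)) hex₂ = -hex₀ - hex₂ := by
  have hs : √3 ^ 2 = 3 := sq_sqrt (by norm_num)
  ext i
  fin_cases i <;>
    simp [planeRotation_apply, hex₀, hex₂, cos_two_mul_pi_div_three, sin_two_mul_pi_div_three] <;>
    linarith [hs]

lemma planeRotation_image_pentagon_hex₀_hex₂ :
    planeRotation (2 * (π / 3)) '' pentagon hex₀ hex₂ = pentagon hex₂ (-hex₀ - hex₂) := by
  rw [image_pentagon, planeRotation_hex₀, planeRotation_hex₂]

lemma planeRotation_image_pentagon_hex₂ :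
    planeRotation (2 * (π / 3)) '' pentagon hex₂ (-hex₀ - hex₂) = pentagon (-hex₀ - hex₂) hex₀ := by
  rw [image_pentagon, planeRotation_hex₂, map_sub, map_neg, planeRotation_hex₀, planeRotation_hex₂]
  congr 1
  abel

lemma EuclideanSpace.dist_eq_fin_two (x y : ℝ²) :
    dist x y = √((x 0 - y 0) ^ 2 + (x 1 - y 1) ^ 2) := by
  simp [EuclideanSpace.dist_eq, Fin.sum_univ_two, Real.dist_eq, sq_abs]

lemma diam_pentagon_hex₀_hex₂ : diam (pentagon hex₀ hex₂) = √3 / 2 := by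
  have hs : √3 ^ 2 = 3 := sq_sqrt (by norm_num)
  rw [pentagon, convexHull_diam]
  apply le_antisymm
  · refine diam_le_of_forall_dist_le (by positivity) ?_
    rintro _ ⟨i, rfl⟩ _ ⟨j, rfl⟩
    rw [EuclideanSpace.dist_eq_fin_two, sqrt_le_left (by positivity)]
    fin_cases i <;> fin_cases j <;> simp [pentagonVertex, hex₀, hex₂] <;> nlinarith [hs]
  · calc √3 / 2 = dist (pentagonVertex hex₀ hex₂ 1) (pentagonVertex hex₀ hex₂ 4) := by
          rw [EuclideanSpace.dist_eq_fin_two, eq_comm,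
            sqrt_eq_iff_eq_sq (by positivity) (by positivity)]
          simp [pentagonVertex, hex₀, hex₂]
          linarith [hs]
      _ ≤ _ := dist_le_diam_of_mem (finite_range _).isBounded ⟨1, rfl⟩ ⟨4, rfl⟩

end RegularHexagon

theorem stmt8 (V : Fin 6 → EuclideanSpace ℝ (Fin 2)) (O : EuclideanSpace ℝ (Fin 2))
    (hreg : ∀ i : Fin 6, V i = O + (WithLp.equiv 2 (Fin 2 → ℝ)).symm
      ![(1 / Real.sqrt 3) * Real.cos (i * (Real.pi / 3)),
        (1 / Real.sqrt 3) * Real.sin (i * (Real.pi / 3))]) :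
    ∃ P₁ P₂ P₃ : Set (EuclideanSpace ℝ (Fin 2)),
      (∃ q₁ q₂ q₃ : Fin 5 → EuclideanSpace ℝ (Fin 2),
        P₁ = convexHull ℝ (Set.range q₁) ∧ P₂ = convexHull ℝ (Set.range q₂) ∧
        P₃ = convexHull ℝ (Set.range q₃)) ∧
      convexHull ℝ (Set.range V) = P₁ ∪ P₂ ∪ P₃ ∧
      (∃ f g : EuclideanSpace ℝ (Fin 2) ≃ᵢ EuclideanSpace ℝ (Fin 2), f '' P₁ = P₂ ∧ g '' P₁ = P₃) ∧
      Metric.diam P₁ = Real.sqrt 3 / 2 ∧ Metric.diam P₂ = Real.sqrt 3 / 2 ∧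
      Metric.diam P₃ = Real.sqrt 3 / 2 ∧ Real.sqrt 3 / 2 < 1 := by
  set ρ := planeRotation (2 * (π / 3))
  set T := AffineIsometryEquiv.constVAdd ℝ (EuclideanSpace ℝ (Fin 2)) O
  have hV : V = T ∘ hexagonVertex hex₀ hex₂ := by
    funext i
    exact (hreg i).trans (congrArg (O + ·) (hexagonVertex_hex₀_hex₂ i).symm)
  have hT {n : ℕ} (v : Fin n → EuclideanSpace ℝ (Fin 2)) :
      T '' convexHull ℝ (range v) = convexHull ℝ (range (T ∘ v)) := by
    rw [range_comp]
    exact T.toAffineEquiv.toAffineMap.image_convexHull _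
  let f := (T.symm.trans (ρ.toAffineIsometryEquiv.trans T)).toIsometryEquiv
  have hf (S : Set (EuclideanSpace ℝ (Fin 2))) : f '' (T '' S) = T '' (ρ '' S) := by
    simp [f, image_image]
  have hρ₁ := planeRotation_image_pentagon_hex₀_hex₂
  have hρ₂ := planeRotation_image_pentagon_hex₂
  refine ⟨T '' pentagon hex₀ hex₂, T '' pentagon hex₂ (-hex₀ - hex₂),
    T '' pentagon (-hex₀ - hex₂) hex₀, ⟨_, _, _, hT _, hT _, hT _⟩, ?_, ⟨f, f.trans f, ?_, ?_⟩,
    ?_, ?_, ?_, ?_⟩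
  · rw [hV, ← hT, ← hexagon, hexagon_eq_union_pentagon, image_union, image_union]
  · rw [hf, hρ₁]
  · rw [show ⇑(f.trans f) = f ∘ f from rfl, image_comp, hf, hf, hρ₁, hρ₂]
  · rw [T.diam_image, diam_pentagon_hex₀_hex₂]
  · rw [T.diam_image, ← hρ₁, ρ.diam_image, diam_pentagon_hex₀_hex₂]
  · rw [T.diam_image, ← hρ₂, ← hρ₁, ρ.diam_image, ρ.diam_image, diam_pentagon_hex₀_hex₂]
  · rw [div_lt_one two_pos, sqrt_lt' two_pos]
    norm_num
end
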